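/- arXiv:1307.0124 — 4 statements merged into one kernel-verified Lean document; each statement's English description precedes it below -/
import Mathlib

section
/- If P is a generic p×q transportation polytope (i.e., ∑_{i∈Y} u_i ≠ ∑_{j∈Z} v_j for all nonempty proper subsets Y ⊊ [p], Z ⊊ [q]), then a point x ∈ P is a vertex of P if and only if |supp(x)| = p+q-1, where supp(x) = {(i,j) : x_{i,j} > 0}. -/
/-!
By the vertex criterion for polyhedra `{x ≥ 0 | L x = b}`, `x` is a vertex iff no nonzero matrix
supported on `supp x` has zero row and column sums, i.e. iff the columns of the incidence matrix
of the bipartite graph with edge set `supp x` are linearly independent. Genericity makes this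
graph connected: if no edge of `supp x` joins `Y ∪ Z` to its complement, then `∑_Y u = ∑_Z v`.
For a connected bipartite graph the left kernel of the incidence matrix is spanned by
`(1, …, 1, -1, …, -1)`, so its rank is `p + q - 1`, and its columns are independent iff there
are exactly `p + q - 1` edges.
-/

open Finset

/-- The `p × q` classical transportation polytope defined by marginals `u` and `v`. -/
def transportationPolytope (p q : ℕ) (u : Fin p → ℝ) (v : Fin q → ℝ) :
    Set (Matrix (Fin p) (Fin q) ℝ) :=
  {x | (∀ i j, 0 ≤ x i j) ∧ (∀ i, ∑ j, x i j = u i) ∧ (∀ j, ∑ i, x i j = v j)}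

open Module Matrix

section StandardForm

variable {m n F : Type*} [AddCommGroup F] [Module ℝ F]

open Filter Topology in
theorem exists_pos_mul_abs_le [Finite m] [Finite n] {x d : Matrix m n ℝ}
    (hx : ∀ i j, 0 ≤ x i j) (hd : ∀ i j, x i j = 0 → d i j = 0) :
    ∃ ε > 0, ∀ i j, ε * |d i j| ≤ x i j := by
  have h : ∀ i j, ∀ᶠ ε in 𝓝 (0 : ℝ), ε * |d i j| ≤ x i j := by
    intro i j
    rcases (hx i j).eq_or_lt with h0 | hpos
    · simp [hd i j h0.symm, ← h0]
    · have : Tendsto (fun ε : ℝ => ε * |d i j|) (𝓝 0) (𝓝 0) := by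
        simpa using (tendsto_id (x := 𝓝 (0 : ℝ))).mul_const |d i j|
      exact this.eventually (eventually_le_nhds hpos)
  have h' := (eventually_all.2 fun i => eventually_all.2 (h i))
  exact ((h'.filter_mono nhdsWithin_le_nhds).and self_mem_nhdsWithin).exists (f := 𝓝[>] 0)
    |>.imp fun ε hε => ⟨hε.2, hε.1⟩

def standardPolyhedron (L : Matrix m n ℝ →ₗ[ℝ] F) (b : F) : Set (Matrix m n ℝ) :=
  {x | (∀ i j, 0 ≤ x i j) ∧ L x = b}

theorem mem_extremePoints_standardPolyhedron_iff [Finite m] [Finite n]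
    {L : Matrix m n ℝ →ₗ[ℝ] F} {b : F} {x : Matrix m n ℝ} (hx : x ∈ standardPolyhedron L b) :
    x ∈ Set.extremePoints ℝ (standardPolyhedron L b) ↔
      ∀ d ∈ LinearMap.ker L, (∀ i j, x i j = 0 → d i j = 0) → d = 0 := by
  refine ⟨fun hext d hdL hd => ?_, fun h => ⟨hx, ?_⟩⟩
  · obtain ⟨ε, hε, hεd⟩ := exists_pos_mul_abs_le hx.1 hd
    have hmem : ∀ t : ℝ, |t| = ε → x + t • d ∈ standardPolyhedron L b := fun t ht => by
      refine ⟨fun i j => ?_, by simp [LinearMap.mem_ker.1 hdL, hx.2]⟩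
      have : -(ε * |d i j|) ≤ t * d i j := by rw [← ht, ← abs_mul]; exact neg_abs_le _
      simp only [Matrix.add_apply, Matrix.smul_apply, smul_eq_mul]
      linarith [hεd i j]
    have hseg : x ∈ openSegment ℝ (x + ε • d) (x + (-ε) • d) := by
      simpa [sub_eq_add_neg] using mem_openSegment_add_sub (𝕜 := ℝ) x (ε • d)
    simpa [hε.ne'] using hext.2 (hmem ε (abs_of_pos hε)) (hmem (-ε) (by simp [hε.le])) hseg
  · rintro y ⟨hy, hLy⟩ z ⟨hz, hLz⟩ ⟨a, c, ha, hc, hac, rfl⟩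
    have hyz : y = z := by
      refine sub_eq_zero.1 (h (y - z) (by simp [hLy, hLz]) fun i j hij => ?_)
      have : a * y i j + c * z i j = 0 := by simpa using hij
      have hy0 : y i j = 0 := by nlinarith [hy i j, hz i j]
      have hz0 : z i j = 0 := by nlinarith [hy i j, hz i j]
      simp [hy0, hz0]
    rw [← hyz, ← add_smul, hac, one_smul]

end StandardForm

section Bipartite

variable {m n : Type*} [Fintype m] [Fintype n] [DecidableEq m] [DecidableEq n]

def marginals : Matrix m n ℝ →ₗ[ℝ] (m ⊕ n → ℝ) where
  toFun x := Sum.elim (fun i => ∑ j, x i j) (fun j => ∑ i, x i j)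
  map_add' x y := by ext (i | j) <;> simp [sum_add_distrib]
  map_smul' c x := by ext (i | j) <;> simp [mul_sum]

/-- The bipartite graph on `m ⊕ n` with edge set `S` is connected: every cut
`(Y ⊕ Z, Yᶜ ⊕ Zᶜ)` crossed by no edge is trivial. -/
def BipartiteConnected (S : Finset (m × n)) : Prop :=
  ∀ (Y : Finset m) (Z : Finset n), (∀ ij ∈ S, ij.1 ∈ Y ↔ ij.2 ∈ Z) →
    (Y = ∅ ∧ Z = ∅) ∨ (Y = univ ∧ Z = univ)

def incidenceMatrix (S : Finset (m × n)) : Matrix (m ⊕ n) S ℝ :=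
  Matrix.of fun k s => if k = .inl s.1.1 ∨ k = .inr s.1.2 then 1 else 0

theorem vecMul_incidenceMatrix (S : Finset (m × n)) (w : m ⊕ n → ℝ) :
    w ᵥ* incidenceMatrix S = fun s => w (.inl s.1.1) + w (.inr s.1.2) := by
  ext s
  simp [incidenceMatrix, vecMul, dotProduct, ite_or]

theorem incidenceMatrix_mulVec_restrict_eq_marginals {S : Finset (m × n)} {d : Matrix m n ℝ}
    (hd : ∀ i j, (i, j) ∉ S → d i j = 0) :
    incidenceMatrix S *ᵥ (fun s => d s.1.1 s.1.2) = marginals d := by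
  ext k
  calc (incidenceMatrix S *ᵥ fun s => d s.1.1 s.1.2) k
      = ∑ ij ∈ S, (if k = .inl ij.1 ∨ k = .inr ij.2 then 1 else 0) * d ij.1 ij.2 :=
        sum_coe_sort S fun ij : m × n =>
          (if k = .inl ij.1 ∨ k = .inr ij.2 then 1 else 0) * d ij.1 ij.2
    _ = ∑ ij : m × n, (if k = .inl ij.1 ∨ k = .inr ij.2 then 1 else 0) * d ij.1 ij.2 :=
        sum_subset (subset_univ S) fun ij _ hij => by simp [hd _ _ hij]
    _ = marginals d k := by cases k <;> simp [Fintype.sum_prod_type, marginals, eq_comm]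

theorem ker_mulVecLin_transpose_incidenceMatrix [Nonempty m] {S : Finset (m × n)}
    (hS : BipartiteConnected S) :
    LinearMap.ker (incidenceMatrix S)ᵀ.mulVecLin = ℝ ∙ Sum.elim (1 : m → ℝ) (-1 : n → ℝ) := by
  refine le_antisymm (fun w hw => ?_) ?_
  · have hw' : ∀ ij ∈ S, w (.inl ij.1) + w (.inr ij.2) = 0 := fun ij hij => by
      simpa [vecMul_incidenceMatrix] using congrFun (LinearMap.mem_ker.1 hw) ⟨ij, hij⟩
    obtain ⟨i₀⟩ := ‹Nonempty m›
    set c := w (.inl i₀)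
    have hYZ := hS (univ.filter fun i => w (.inl i) = c) (univ.filter fun j => w (.inr j) = -c)
      fun ij hij => by
        have := hw' ij hij
        simp only [mem_filter, mem_univ, true_and]
        constructor <;> intro <;> linarith
    rcases hYZ with ⟨hY, -⟩ | ⟨hY, hZ⟩
    · exact absurd rfl (filter_eq_empty_iff.1 hY (mem_univ i₀))
    · refine Submodule.mem_span_singleton.2 ⟨c, funext fun k => ?_⟩
      rcases k with i | j
      · simpa using (filter_eq_self.1 hY i (mem_univ i)).symm
      · simpa using (filter_eq_self.1 hZ j (mem_univ j)).symm
  · rw [Submodule.span_le, Set.singleton_subset_iff, SetLike.mem_coe, LinearMap.mem_ker]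
    ext s
    simp [vecMul_incidenceMatrix]

theorem rank_incidenceMatrix_add_one [Nonempty m] {S : Finset (m × n)}
    (hS : BipartiteConnected S) :
    (incidenceMatrix S).rank + 1 = Fintype.card m + Fintype.card n := by
  have hne : Sum.elim (1 : m → ℝ) (-1 : n → ℝ) ≠ 0 := fun h => by
    simpa using congrFun h (.inl (Classical.arbitrary m))
  have := LinearMap.finrank_range_add_finrank_ker (incidenceMatrix S)ᵀ.mulVecLin
  rw [ker_mulVecLin_transpose_incidenceMatrix hS, finrank_span_singleton hne,
    finrank_fintype_fun_eq_card, Fintype.card_sum] at this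
  rwa [← rank_transpose]

theorem ker_incidenceMatrix_eq_bot_iff [Nonempty m] {S : Finset (m × n)}
    (hS : BipartiteConnected S) :
    LinearMap.ker (incidenceMatrix S).mulVecLin = ⊥ ↔
      S.card + 1 = Fintype.card m + Fintype.card n := by
  have := LinearMap.finrank_range_add_finrank_ker (incidenceMatrix S).mulVecLin
  rw [finrank_fintype_fun_eq_card, Fintype.card_coe] at this
  have hrank := rank_incidenceMatrix_add_one hS
  rw [← Submodule.finrank_eq_zero (R := ℝ)]
  change (incidenceMatrix S).rank + _ = _ at this
  omega

theorem ker_incidenceMatrix_eq_bot_iff_forall_marginals {S : Finset (m × n)} :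
    LinearMap.ker (incidenceMatrix S).mulVecLin = ⊥ ↔
      ∀ d ∈ LinearMap.ker marginals, (∀ i j, (i, j) ∉ S → d i j = 0) → d = 0 := by
  rw [LinearMap.ker_eq_bot']
  constructor
  · intro h d hd hdS
    have hf := h _ <|
      (incidenceMatrix_mulVec_restrict_eq_marginals hdS).trans (LinearMap.mem_ker.1 hd)
    ext i j
    by_cases hij : (i, j) ∈ S
    · exact congrFun hf ⟨(i, j), hij⟩
    · exact hdS i j hij
  · intro h f hf
    set d : Matrix m n ℝ := of fun i j => if hij : (i, j) ∈ S then f ⟨(i, j), hij⟩ else 0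
    have hdS : ∀ i j, (i, j) ∉ S → d i j = 0 := fun i j hij => dif_neg hij
    have hfd : (fun s : S => d s.1.1 s.1.2) = f := funext fun s => dif_pos s.2
    have hd : d ∈ LinearMap.ker marginals := by
      rw [LinearMap.mem_ker, ← incidenceMatrix_mulVec_restrict_eq_marginals hdS, hfd]
      exact hf
    rw [← hfd, h d hd hdS]
    rfl

end Bipartite

theorem transportationPolytope_eq_standardPolyhedron (p q : ℕ) (u : Fin p → ℝ)
    (v : Fin q → ℝ) :
    transportationPolytope p q u v = standardPolyhedron marginals (Sum.elim u v) := by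
  ext x
  simp [transportationPolytope, standardPolyhedron, marginals, funext_iff, Sum.forall]

theorem sum_eq_sum_of_forall_pos_mem_iff {p q : ℕ} {u : Fin p → ℝ} {v : Fin q → ℝ}
    {x : Matrix (Fin p) (Fin q) ℝ} (hx : x ∈ transportationPolytope p q u v)
    {Y : Finset (Fin p)} {Z : Finset (Fin q)} (hYZ : ∀ i j, 0 < x i j → (i ∈ Y ↔ j ∈ Z)) :
    ∑ i ∈ Y, u i = ∑ j ∈ Z, v j := by
  obtain ⟨hx0, hrow, hcol⟩ := hx
  have hblock : ∀ i j, (if i ∈ Y then x i j else 0) = if j ∈ Z then x i j else 0 := by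
    intro i j
    rcases (hx0 i j).eq_or_lt with h | h
    · simp [← h]
    · simp [hYZ i j h]
  calc ∑ i ∈ Y, u i = ∑ i, ∑ j, if i ∈ Y then x i j else 0 := by
        simp [← hrow]
    _ = ∑ j, ∑ i, if j ∈ Z then x i j else 0 := by simp_rw [hblock]; exact sum_comm
    _ = ∑ j ∈ Z, v j := by simp [← hcol]

theorem bipartiteConnected_of_generic {p q : ℕ} {u : Fin p → ℝ} {v : Fin q → ℝ}
    (hu : ∀ i, 0 < u i) (hv : ∀ j, 0 < v j)
    (hgen : ∀ (Y : Finset (Fin p)) (Z : Finset (Fin q)),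
      Y.Nonempty → Y ≠ univ → Z.Nonempty → Z ≠ univ → ∑ i ∈ Y, u i ≠ ∑ j ∈ Z, v j)
    {x : Matrix (Fin p) (Fin q) ℝ} (hx : x ∈ transportationPolytope p q u v) :
    BipartiteConnected (univ.filter fun ij : Fin p × Fin q => 0 < x ij.1 ij.2) := by
  have eq_empty_of_sum {ι : Type} {f : ι → ℝ} (hf : ∀ i, 0 < f i) {s : Finset ι}
      (h : ∑ i ∈ s, f i = 0) : s = ∅ :=
    not_nonempty_iff_eq_empty.1 fun hs => (sum_pos (fun i _ => hf i) hs).ne' h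
  intro Y Z hYZ
  have hYZ' : ∀ i j, 0 < x i j → (i ∈ Y ↔ j ∈ Z) := fun i j h => hYZ (i, j) (by simpa using h)
  have hsum := sum_eq_sum_of_forall_pos_mem_iff hx hYZ'
  have hsumc := sum_eq_sum_of_forall_pos_mem_iff hx (Y := Yᶜ) (Z := Zᶜ) fun i j h => by
    simpa using not_congr (hYZ' i j h)
  rcases Y.eq_empty_or_nonempty with rfl | hY
  · exact .inl ⟨rfl, eq_empty_of_sum hv (by simpa using hsum.symm)⟩
  by_cases hYu : Y = univ
  · subst hYu
    exact .inr ⟨rfl, compl_eq_empty_iff _ |>.1 (eq_empty_of_sum hv (by simpa using hsumc.symm))⟩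
  rcases Z.eq_empty_or_nonempty with rfl | hZ
  · exact absurd (eq_empty_of_sum hu (by simpa using hsum)) hY.ne_empty
  by_cases hZu : Z = univ
  · subst hZu
    exact absurd (compl_eq_empty_iff _ |>.1 (eq_empty_of_sum hu (by simpa using hsumc))) hYu
  exact absurd hsum (hgen Y Z hY hYu hZ hZu)

theorem generic_transportationPolytope_vertex_iff_support_card_general (p q : ℕ)
    (u : Fin p → ℝ) (v : Fin q → ℝ) (hu : ∀ i, 0 < u i) (hv : ∀ j, 0 < v j)
    (hgen : ∀ (Y : Finset (Fin p)) (Z : Finset (Fin q)),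
      Y.Nonempty → Y ≠ Finset.univ → Z.Nonempty → Z ≠ Finset.univ →
      ∑ i ∈ Y, u i ≠ ∑ j ∈ Z, v j)
    (x : Matrix (Fin p) (Fin q) ℝ) (hx : x ∈ transportationPolytope p q u v) :
    x ∈ Set.extremePoints ℝ (transportationPolytope p q u v) ↔
      (Finset.univ.filter fun ij : Fin p × Fin q => 0 < x ij.1 ij.2).card = p + q - 1 := by
  rcases Nat.eq_zero_or_pos p with rfl | hp
  · have hq : q = 0 := by
      by_contra hq
      simpa [← hx.2.2 ⟨0, by omega⟩] using hv ⟨0, by omega⟩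
    subst hq
    simp [Set.extremePoints_eq_self, hx]
  have : Nonempty (Fin p) := ⟨⟨0, hp⟩⟩
  have hconn := bipartiteConnected_of_generic hu hv hgen hx
  set S := univ.filter fun ij : Fin p × Fin q => 0 < x ij.1 ij.2
  have hsupp : ∀ i j, (i, j) ∉ S ↔ x i j = 0 := fun i j => by simpa [S] using (hx.1 i j).ge_iff_eq'
  rw [transportationPolytope_eq_standardPolyhedron] at hx ⊢
  rw [mem_extremePoints_standardPolyhedron_iff hx]
  simp_rw [← hsupp, ← ker_incidenceMatrix_eq_bot_iff_forall_marginals,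
    ker_incidenceMatrix_eq_bot_iff hconn, Fintype.card_fin]
  omega

/-- In a generic transportation polytope, a point is a vertex iff its support has
exactly `p + q - 1` elements. -/
theorem generic_transportationPolytope_vertex_iff_support_card (p q : ℕ)
    (u : Fin p → ℝ) (v : Fin q → ℝ) (hu : ∀ i, 0 < u i) (hv : ∀ j, 0 < v j)
    (hsum : ∑ i, u i = ∑ j, v j)
    (hgen : ∀ (Y : Finset (Fin p)) (Z : Finset (Fin q)),
      Y.Nonempty → Y ≠ Finset.univ → Z.Nonempty → Z ≠ Finset.univ →
      ∑ i ∈ Y, u i ≠ ∑ j ∈ Z, v j)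
    (x : Matrix (Fin p) (Fin q) ℝ) (hx : x ∈ transportationPolytope p q u v) :
    x ∈ Set.extremePoints ℝ (transportationPolytope p q u v) ↔
      (Finset.univ.filter fun ij : Fin p × Fin q => 0 < x ij.1 ij.2).card = p + q - 1 :=
  generic_transportationPolytope_vertex_iff_support_card_general p q u v hu hv hgen x hx
end

section
/- For p ≥ 4, the diameter of the graph of the p-th Birkhoff polytope B_p is exactly 2: there exist non-adjacent vertices, and any two vertices are at graph distance at most 2. -/
open Finset

/-- The `p`-th Birkhoff polytope: the set of `p × p` doubly stochastic matrices. -/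
def birkhoffPolytope (p : ℕ) : Set (Matrix (Fin p) (Fin p) ℝ) :=
  {x | (∀ i j, 0 ≤ x i j) ∧ (∀ i, ∑ j, x i j = 1) ∧ (∀ j, ∑ i, x i j = 1)}

/-- Two vertices of a polytope `P` are adjacent iff they are distinct and the segment
joining them is a face (an extreme subset) of `P`, i.e. an edge. -/
def AdjacentVertices {E : Type*} [AddCommGroup E] [Module ℝ E]
    (P : Set E) (x y : E) : Prop :=
  x ≠ y ∧ IsExtreme ℝ P (segment ℝ x y)

/-!
The vertices of `B_n` are the permutation matrices `P_σ` (Birkhoff). If `τ⁻¹σ` is a cycle, the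
face of `B_n` where all entries off the graphs of `σ` and `τ` vanish is exactly the segment
`[P_σ, P_τ]`: on such a face the column sums make `i ↦ w i (σ i)` invariant under `τ⁻¹σ`, hence
constant on its one nontrivial cycle. Any other `τ⁻¹σ ≠ 1` is a product `γβ` of two cycles (a
cycle `ρ` through one point of each cycle of `π` merges them into the single cycle `πρ`, and
`π = (πρ)ρ⁻¹`), so `P_σ, P_{τγ}, P_τ` is a path. Finally `P_1 + P_{(ab)(cd)} = P_{(ab)} + P_{(cd)}`,
so the midpoint of `[P_1, P_{(ab)(cd)}]` lies between two other vertices and this segment is not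
an edge.
-/

open Equiv Equiv.Perm

namespace Equiv.Perm

theorem SameCycle.apply_eq_of_comp_eq {α β : Type*} [Finite α] {c : Perm α} {f : α → β}
    {x y : α} (hf : f ∘ c = f) (h : c.SameCycle x y) : f x = f y := by
  obtain ⟨k, rfl⟩ := h.exists_nat_pow_eq
  clear h
  induction k with
  | zero => rfl
  | succ k ih => rw [ih, pow_succ', Perm.mul_apply]; exact (congrFun hf _).symm

section Transversal

variable {α : Type*} [Fintype α] [DecidableEq α] {π ρ : Perm α}

theorem sameCycle_mul_of_sameCycle {a x : α}
    (hρ : ∀ y ∈ ρ.support, π.SameCycle y a → y = a) (hx : π.SameCycle x a) :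
    (π * ρ).SameCycle x a := by
  obtain ⟨n, hn⟩ := hx.exists_nat_pow_eq
  induction n generalizing x with
  | zero => rw [← hn]; rfl
  | succ n ih =>
    by_cases hxρ : x ∈ ρ.support
    · rw [hρ x hxρ hx]
    · have hπx : (π * ρ).SameCycle (π x) a :=
        ih (sameCycle_apply_left.2 hx) (by rwa [← Perm.mul_apply, ← pow_succ])
      rwa [← sameCycle_apply_left, Perm.mul_apply, notMem_support.1 hxρ]

theorem isCycle_mul_of_support_transversal (hρ : ρ.IsCycle)
    (hsep : ∀ b ∈ ρ.support, ∀ c ∈ ρ.support, π.SameCycle b c → b = c)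
    (hmeet : ∀ x ∈ π.support, ∃ b ∈ ρ.support, π.SameCycle x b) :
    (π * ρ).IsCycle := by
  have merge : ∀ x, ∀ b ∈ ρ.support, π.SameCycle x b → (π * ρ).SameCycle x b :=
    fun x b hb => sameCycle_mul_of_sameCycle fun y hy => hsep y hy b hb
  have step : ∀ b ∈ ρ.support, (π * ρ).SameCycle b (ρ b) := fun b hb =>
    sameCycle_apply_left.1 (merge _ _ (apply_mem_support.2 hb) (sameCycle_apply_left.2 .rfl))
  have connect : ∀ b ∈ ρ.support, ∀ c ∈ ρ.support, (π * ρ).SameCycle b c := by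
    intro b hb c hc
    obtain ⟨n, rfl⟩ := hρ.exists_pow_eq (mem_support.1 hb) (mem_support.1 hc)
    clear hc
    induction n with
    | zero => rfl
    | succ n ih =>
      rw [pow_succ', Perm.mul_apply]
      exact ih.trans (step _ (pow_apply_mem_support.2 hb))
  obtain ⟨b₀, hb₀, -⟩ := hρ
  refine ⟨b₀, fun h => ?_, fun y hy => ?_⟩
  · have : π.SameCycle (ρ b₀) b₀ := by
      rw [← sameCycle_apply_left, ← Perm.mul_apply, h]
    exact hb₀ (hsep _ (apply_mem_support.2 (mem_support.2 hb₀)) _ (mem_support.2 hb₀) this)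
  · by_cases hyρ : y ∈ ρ.support
    · exact connect _ (mem_support.2 hb₀) _ hyρ
    · have hyπ : y ∈ π.support := by
        rwa [Perm.mul_apply, notMem_support.1 hyρ, ← mem_support] at hy
      obtain ⟨b, hb, hyb⟩ := hmeet y hyπ
      exact (connect _ (mem_support.2 hb₀) _ hb).trans (merge y b hb hyb).symm

theorem exists_isCycle_support_eq_of_two_le_card {s : Finset α} (hs : 2 ≤ s.card) :
    ∃ ρ : Perm α, ρ.IsCycle ∧ ρ.support = s := by
  have hlen : 2 ≤ s.toList.length := by rwa [Finset.length_toList]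
  refine ⟨s.toList.formPerm, List.isCycle_formPerm s.nodup_toList hlen, ?_⟩
  rw [List.support_formPerm_of_nodup _ s.nodup_toList, Finset.toList_toFinset]
  rintro x hx
  simp [hx] at hlen

theorem exists_isCycle_mul_isCycle_eq (h1 : π ≠ 1) (hc : ¬π.IsCycle) :
    ∃ γ β : Perm α, γ.IsCycle ∧ β.IsCycle ∧ γ * β = π := by
  let r : α → α := fun x => (Quotient.mk (SameCycle.setoid π) x).out
  have hr : ∀ x, π.SameCycle (r x) x := fun x => Quotient.mk_out (s := SameCycle.setoid π) x
  have hr_eq : ∀ x y, π.SameCycle x y → r x = r y := fun x y h =>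
    congrArg Quotient.out (Quotient.sound h)
  set T := π.support.image r
  have hsep : ∀ b ∈ T, ∀ c ∈ T, π.SameCycle b c → b = c := by
    simp only [T, Finset.mem_image]
    rintro _ ⟨x, -, rfl⟩ _ ⟨y, -, rfl⟩ h
    exact hr_eq x y (((hr x).symm.trans h).trans (hr y))
  have hmeet : ∀ x ∈ π.support, ∃ b ∈ T, π.SameCycle x b := fun x hx =>
    ⟨r x, Finset.mem_image_of_mem r hx, (hr x).symm⟩
  obtain ⟨x, hx⟩ : π.support.Nonempty :=
    Finset.nonempty_iff_ne_empty.2 (support_eq_empty_iff.not.2 h1)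
  have hT : 2 ≤ T.card := by
    by_contra! hT
    have hrx : ∀ c ∈ T, c = r x := fun c hc =>
      Finset.card_le_one.1 (by omega) c hc _ (Finset.mem_image_of_mem r hx)
    refine hc ⟨r x, mem_support.1 ((hr x).mem_support_iff.2 hx), fun y hy => ?_⟩
    obtain ⟨c, hc, hyc⟩ := hmeet y (mem_support.2 hy)
    exact (hrx c hc ▸ hyc).symm
  obtain ⟨ρ, hρ, hρT⟩ := exists_isCycle_support_eq_of_two_le_card hT
  rw [← hρT] at hsep hmeet
  exact ⟨π * ρ, ρ⁻¹, isCycle_mul_of_support_transversal hρ hsep hmeet, hρ.inv,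
    mul_inv_cancel_right π ρ⟩

end Transversal

section PermMatrix

variable {R n : Type*} [DecidableEq n]

theorem permMatrix_apply_eq_ite [Zero R] [One R] (σ : Perm n) (i j : n) :
    σ.permMatrix R i j = if σ i = j then 1 else 0 := by
  simp [PEquiv.toMatrix_apply]

theorem permMatrix_injective [MulZeroOneClass R] [Nontrivial R] :
    Function.Injective fun σ : Perm n => σ.permMatrix R :=
  fun σ τ h => ext fun i => by
    simpa [eq_comm] using congrFun₂ h i (σ i)

theorem Disjoint.permMatrix_one_add_permMatrix_mul [AddCommMonoidWithOne R]
    {α β : Perm n} (h : α.Disjoint β) :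
    (1 : Perm n).permMatrix R + (α * β).permMatrix R = α.permMatrix R + β.permMatrix R := by
  ext i j
  rcases h i with hα | hβ
  · have hαβ : α (β i) = β i := (h (β i)).elim id fun hβ => by rw [β.injective hβ, hα]
    simp [Matrix.one_apply, hα, hαβ]
  · simp [Matrix.one_apply, hβ, add_comm]

end PermMatrix

end Equiv.Perm

namespace Matrix

variable {R n : Type*} [Fintype n] [DecidableEq n]

theorem apply_eq_mul_permMatrix_add_mul_permMatrix [Ring R] {w : Matrix n n R}
    {σ τ : Perm n} {i : n} (hrow : ∑ j, w i j = 1)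
    (hzero : ∀ j, σ i ≠ j → τ i ≠ j → w i j = 0) (j : n) :
    w i j = w i (σ i) * σ.permMatrix R i j + (1 - w i (σ i)) * τ.permMatrix R i j := by
  rcases eq_or_ne (σ i) (τ i) with h | h
  · rw [Finset.sum_eq_single (σ i) (fun k _ hk => hzero k hk.symm (h ▸ hk.symm)) (by simp)]
      at hrow
    by_cases hj : σ i = j <;> simp_all
  · rw [Finset.sum_eq_add_of_mem _ _ (Finset.mem_univ _) (Finset.mem_univ _) h
      (fun k _ hk => hzero k (Ne.symm hk.1) (Ne.symm hk.2))] at hrow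
    by_cases hσ : σ i = j
    · subst hσ; simp [h.symm]
    by_cases hτ : τ i = j
    · subst hτ; simpa [permMatrix_apply_eq_ite, hσ] using eq_sub_of_add_eq' hrow
    · simp [hσ, hτ, hzero j hσ hτ]

theorem comp_inv_mul_eq_of_sum_col_eq_one [Ring R] {w : Matrix n n R} {σ τ : Perm n}
    {f : n → R}
    (hw : ∀ i j, w i j = f i * σ.permMatrix R i j + (1 - f i) * τ.permMatrix R i j)
    (hcol : ∀ j, ∑ i, w i j = 1) : f ∘ ⇑(τ⁻¹ * σ) = f := by
  funext i
  have := hcol (σ i)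
  simp [hw, Finset.sum_add_distrib, ← eq_symm_apply] at this
  simp only [Function.comp_apply, Perm.mul_apply, Perm.inv_def]
  grind

variable [Field R] [LinearOrder R] [IsStrictOrderedRing R]

theorem isExtreme_doublyStochastic_setOf_forall_eq_zero (Z : n → n → Prop) :
    IsExtreme R (doublyStochastic R n : Set (Matrix n n R))
      {w ∈ (doublyStochastic R n : Set (Matrix n n R)) | ∀ i j, Z i j → w i j = 0} := by
  refine ⟨fun w hw => hw.1, fun a ha b hb x hx hxab => ?_⟩
  obtain ⟨s, t, hs, ht, -, rfl⟩ := hxab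
  refine ⟨ha, fun i j hij => ?_⟩
  have hsum : s * a i j + t * b i j = 0 := by simpa using hx.2 i j hij
  have hsa := mul_nonneg hs.le (nonneg_of_mem_doublyStochastic ha (i := i) (j := j))
  have htb := mul_nonneg ht.le (nonneg_of_mem_doublyStochastic hb (i := i) (j := j))
  exact (mul_eq_zero.1 (by linarith)).resolve_left hs.ne'

theorem segment_permMatrix_eq_of_isCycle {σ τ : Perm n} (hc : (τ⁻¹ * σ).IsCycle) :
    segment R (σ.permMatrix R) (τ.permMatrix R) =
      {w ∈ (doublyStochastic R n : Set (Matrix n n R)) |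
        ∀ i j, σ i ≠ j ∧ τ i ≠ j → w i j = 0} := by
  ext w
  constructor
  · intro hw
    refine ⟨convex_doublyStochastic.segment_subset permMatrix_mem_doublyStochastic
      permMatrix_mem_doublyStochastic hw, fun i j hij => ?_⟩
    obtain ⟨s, t, -, -, -, rfl⟩ := hw
    simp [hij.1, hij.2]
  · rintro ⟨hw, hzero⟩
    set f : n → R := fun i => w i (σ i)
    have hrow : ∀ i j, w i j = f i * σ.permMatrix R i j + (1 - f i) * τ.permMatrix R i j :=
      fun i => apply_eq_mul_permMatrix_add_mul_permMatrix (sum_row_of_mem_doublyStochastic hw i)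
        fun j hσ hτ => hzero i j ⟨hσ, hτ⟩
    have hf : f ∘ ⇑(τ⁻¹ * σ) = f :=
      comp_inv_mul_eq_of_sum_col_eq_one hrow (sum_col_of_mem_doublyStochastic hw)
    obtain ⟨i₀, -, hcyc⟩ := hc
    refine ⟨f i₀, 1 - f i₀, nonneg_of_mem_doublyStochastic hw,
      sub_nonneg.2 (le_one_of_mem_doublyStochastic hw), add_sub_cancel _ _, ?_⟩
    ext i j
    rw [hrow i j, add_apply, smul_apply, smul_apply, smul_eq_mul, smul_eq_mul]
    by_cases hi : (τ⁻¹ * σ) i = i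
    · rw [Perm.mul_apply, inv_eq_iff_eq] at hi
      simp only [permMatrix_apply_eq_ite, hi]
      ring
    · rw [(hcyc hi).apply_eq_of_comp_eq hf]

end Matrix

theorem not_adjacentVertices_of_add_eq_add {E : Type*} [AddCommGroup E] [Module ℝ E] {P : Set E}
    {x y u v : E} (hu : u ∈ P.extremePoints ℝ) (hv : v ∈ P) (hux : u ≠ x) (huy : u ≠ y)
    (h : x + y = u + v) : ¬AdjacentVertices P x y := by
  rintro ⟨-, hxy⟩
  have hmid : (1 / 2 : ℝ) • x + (1 / 2 : ℝ) • y ∈ openSegment ℝ u v :=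
    ⟨1 / 2, 1 / 2, by norm_num, by norm_num, by norm_num, by rw [← smul_add, ← smul_add, h]⟩
  have hu_seg : u ∈ segment ℝ x y :=
    hxy.2 hu.1 hv ⟨1 / 2, 1 / 2, by norm_num, by norm_num, by norm_num, rfl⟩ hmid
  rcases (mem_extremePoints_iff_forall_segment.1 hu).2 x (hxy.1 (left_mem_segment ℝ x y))
    y (hxy.1 (right_mem_segment ℝ x y)) hu_seg with h | h
  exacts [hux h.symm, huy h.symm]

section DoublyStochastic

variable {n : Type*} [Fintype n] [DecidableEq n]

theorem adjacentVertices_permMatrix_of_isCycle {σ τ : Perm n} (hc : (τ⁻¹ * σ).IsCycle) :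
    AdjacentVertices (doublyStochastic ℝ n : Set (Matrix n n ℝ))
      (σ.permMatrix ℝ) (τ.permMatrix ℝ) :=
  ⟨fun h => hc.ne_one (inv_mul_eq_one.2 (permMatrix_injective h).symm),
    Matrix.segment_permMatrix_eq_of_isCycle (R := ℝ) hc ▸
      Matrix.isExtreme_doublyStochastic_setOf_forall_eq_zero _⟩

theorem adjacentVertices_or_exists_adjacentVertices_permMatrix {σ τ : Perm n} (hne : σ ≠ τ) :
    AdjacentVertices (doublyStochastic ℝ n : Set (Matrix n n ℝ))
      (σ.permMatrix ℝ) (τ.permMatrix ℝ) ∨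
    ∃ γ : Perm n,
      AdjacentVertices (doublyStochastic ℝ n : Set (Matrix n n ℝ))
        (σ.permMatrix ℝ) ((τ * γ).permMatrix ℝ) ∧
      AdjacentVertices (doublyStochastic ℝ n : Set (Matrix n n ℝ))
        ((τ * γ).permMatrix ℝ) (τ.permMatrix ℝ) := by
  by_cases hc : (τ⁻¹ * σ).IsCycle
  · exact .inl (adjacentVertices_permMatrix_of_isCycle hc)
  obtain ⟨γ, β, hγ, hβ, hγβ⟩ :=
    exists_isCycle_mul_isCycle_eq (fun h => hne (inv_mul_eq_one.1 h).symm) hc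
  refine .inr ⟨γ, adjacentVertices_permMatrix_of_isCycle ?_,
    adjacentVertices_permMatrix_of_isCycle (by rwa [inv_mul_cancel_left])⟩
  rwa [_root_.mul_inv_rev, mul_assoc, ← hγβ, inv_mul_cancel_left]

theorem not_adjacentVertices_permMatrix_one_swap_mul_swap {a b c d : n}
    (h : [a, b, c, d].Nodup) :
    ¬AdjacentVertices (doublyStochastic ℝ n : Set (Matrix n n ℝ))
      ((1 : Perm n).permMatrix ℝ) ((swap a b * swap c d).permMatrix ℝ) := by
  have hab : swap a b ≠ 1 := swap_eq_one_iff.not.2 (by simp_all)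
  have hcd : swap c d ≠ 1 := swap_eq_one_iff.not.2 (by simp_all)
  have hext : (swap a b).permMatrix ℝ ∈ (doublyStochastic ℝ n : Set _).extremePoints ℝ := by
    rw [extremePoints_doublyStochastic]
    exact ⟨_, rfl⟩
  refine not_adjacentVertices_of_add_eq_add hext permMatrix_mem_doublyStochastic
    ((permMatrix_injective (R := ℝ)).ne hab)
    ((permMatrix_injective (R := ℝ)).ne fun h => hcd (left_eq_mul.1 h))
    (disjoint_swap_swap h).permMatrix_one_add_permMatrix_mul

end DoublyStochastic

theorem birkhoffPolytope_eq_doublyStochastic (p : ℕ) :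
    birkhoffPolytope p = doublyStochastic ℝ (Fin p) := by
  ext x
  rw [SetLike.mem_coe, mem_doublyStochastic_iff_sum]
  rfl

/-- For `p ≥ 4`, the diameter of the graph of the Birkhoff polytope `B_p` is exactly `2`:
some pair of vertices is non-adjacent, and any two distinct vertices are adjacent or
have a common neighbor. -/
theorem birkhoffPolytope_diameter_two (p : ℕ) (hp : 4 ≤ p) :
    (∃ x y, x ∈ Set.extremePoints ℝ (birkhoffPolytope p) ∧
      y ∈ Set.extremePoints ℝ (birkhoffPolytope p) ∧ x ≠ y ∧
      ¬ AdjacentVertices (birkhoffPolytope p) x y) ∧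
    (∀ x y, x ∈ Set.extremePoints ℝ (birkhoffPolytope p) →
      y ∈ Set.extremePoints ℝ (birkhoffPolytope p) → x ≠ y →
      AdjacentVertices (birkhoffPolytope p) x y ∨
      ∃ z, z ∈ Set.extremePoints ℝ (birkhoffPolytope p) ∧
        AdjacentVertices (birkhoffPolytope p) x z ∧
        AdjacentVertices (birkhoffPolytope p) z y) := by
  simp only [birkhoffPolytope_eq_doublyStochastic, extremePoints_doublyStochastic,
    Set.mem_ofPred_eq]
  refine ⟨?_, ?_⟩
  · let a : Fin p := ⟨0, by omega⟩
    let b : Fin p := ⟨1, by omega⟩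
    let c : Fin p := ⟨2, by omega⟩
    let d : Fin p := ⟨3, by omega⟩
    have h : [a, b, c, d].Nodup := by simp [a, b, c, d, Fin.ext_iff]
    refine ⟨_, _, ⟨1, rfl⟩, ⟨swap a b * swap c d, rfl⟩,
      (permMatrix_injective (R := ℝ)).ne ?_,
      not_adjacentVertices_permMatrix_one_swap_mul_swap h⟩
    rw [ne_comm, Ne, (disjoint_swap_swap h).mul_eq_one_iff, swap_eq_one_iff]
    simp [a, b]
  · rintro _ _ ⟨σ, rfl⟩ ⟨τ, rfl⟩ hne
    have hστ : σ ≠ τ := fun h => hne (by rw [h])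
    refine (adjacentVertices_or_exists_adjacentVertices_permMatrix hστ).imp_right ?_
    rintro ⟨γ, hσγ, hγτ⟩
    exact ⟨_, ⟨τ * γ, rfl⟩, hσγ, hγτ⟩
end

section
/- Every integer point of a 2×q transportation polytope with integer marginals can be transformed into any other integer point of the same polytope by a sequence of moves, each move adding a 'rectangular' vector with entries +1, −1 at positions (i,j), (i,j'), (i',j), (i',j') forming a 4-cycle pattern (+1 at (i,j) and (i',j'), −1 at (i,j') and (i',j)), while staying non-negative throughout. -/
open Finset

/-- The integer points of the `2 × q` transportation polytope with integer marginals
`u` and `v`: non-negative integer matrices with row sums `u` and column sums `v`. -/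
def intTransportationTables (q : ℕ) (u : Fin 2 → ℤ) (v : Fin q → ℤ) :
    Set (Matrix (Fin 2) (Fin q) ℤ) :=
  {x | (∀ i j, 0 ≤ x i j) ∧ (∀ i, ∑ j, x i j = u i) ∧ (∀ j, ∑ i, x i j = v j)}

/-- The rectangular move supported on rows `i ≠ i'` and columns `j ≠ j'`:
`+1` at `(i,j)` and `(i',j')`, `-1` at `(i,j')` and `(i',j)`, `0` elsewhere. -/
def rectMove (q : ℕ) (i i' : Fin 2) (j j' : Fin q) : Matrix (Fin 2) (Fin q) ℤ :=
  fun a b =>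
    if (a, b) = (i, j) ∨ (a, b) = (i', j') then 1
    else if (a, b) = (i, j') ∨ (a, b) = (i', j) then -1
    else 0

/-- One rectangular move between integer points of the polytope (both endpoints stay
non-negative with the prescribed margins). -/
def rectStep (q : ℕ) (u : Fin 2 → ℤ) (v : Fin q → ℤ)
    (x y : Matrix (Fin 2) (Fin q) ℤ) : Prop :=
  x ∈ intTransportationTables q u v ∧ y ∈ intTransportationTables q u v ∧
    ∃ (i i' : Fin 2) (j j' : Fin q), i ≠ i' ∧ j ≠ j' ∧ y = x + rectMove q i i' j j'

lemma rect01 (q : ℕ) (j j' : Fin q) (hjj : j ≠ j') (a : Fin 2) (b : Fin q) :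
    rectMove q 0 1 j j' a b =
      (if a = 0 then 1 else -1) * ((if b = j then 1 else 0) - (if b = j' then 1 else 0)) := by
  fin_cases a <;> simp [rectMove, Prod.ext_iff] <;>
    rcases eq_or_ne b j with rfl | hbj <;> rcases eq_or_ne b j' with rfl | hbj' <;>
    simp_all

lemma rect01_rowsum (q : ℕ) (j j' : Fin q) (hjj : j ≠ j') (a : Fin 2) :
    ∑ b, rectMove q 0 1 j j' a b = 0 := by
  simp [rect01 q j j' hjj, ← Finset.mul_sum, Finset.sum_sub_distrib]

lemma rect01_colsum (q : ℕ) (j j' : Fin q) (hjj : j ≠ j') (b : Fin q) :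
    ∑ a, rectMove q 0 1 j j' a b = 0 := by
  rw [Fin.sum_univ_two, rect01 q j j' hjj, rect01 q j j' hjj]
  norm_num

/-- Rectangular moves connect all integer points of a `2 × q` transportation polytope. -/
theorem rectMoves_connect (q : ℕ) (u : Fin 2 → ℤ) (v : Fin q → ℤ)
    (x y : Matrix (Fin 2) (Fin q) ℤ)
    (hx : x ∈ intTransportationTables q u v) (hy : y ∈ intTransportationTables q u v) :
    Relation.ReflTransGen (rectStep q u v) x y := by
  obtain ⟨hy0, hyr, hyc⟩ := hy
  have key : ∀ n (x : Matrix (Fin 2) (Fin q) ℤ), x ∈ intTransportationTables q u v →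
      (∑ j, (x 0 j - y 0 j).natAbs) = n → Relation.ReflTransGen (rectStep q u v) x y := by
    intro n
    induction n using Nat.strong_induction_on with
    | _ n IH =>
      intro x hx hn
      obtain ⟨hx0, hxr, hxc⟩ := hx
      rcases Nat.eq_zero_or_pos n with rfl | hpos
      · -- x = y
        have hall : ∀ j ∈ Finset.univ, ((x 0 j - y 0 j).natAbs) = 0 := by
          rw [← Finset.sum_eq_zero_iff]; exact hn
        have hxy : x = y := by
          funext a b
          have h0 : x 0 b = y 0 b := by
            have := hall b (Finset.mem_univ b); omega
          have h1 : x 1 b = y 1 b := by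
            have hc1 := hxc b; have hc2 := hyc b
            rw [Fin.sum_univ_two] at hc1 hc2
            omega
          rcases (by decide : ∀ a : Fin 2, a = 0 ∨ a = 1) a with rfl | rfl
          · exact h0
          · exact h1
        exact hxy ▸ Relation.ReflTransGen.refl
      · -- find j with x 0 j < y 0 j and j' with x 0 j' > y 0 j'
        have hsum : ∑ j, (x 0 j - y 0 j) = 0 := by
          rw [Finset.sum_sub_distrib, hxr 0, hyr 0, sub_self]
        have hne : ∃ j, x 0 j - y 0 j ≠ 0 := by
          by_contra h
          push_neg at h
          have : ∑ j, (x 0 j - y 0 j).natAbs = 0 :=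
            Finset.sum_eq_zero fun j _ => by rw [h j]; rfl
          omega
        obtain ⟨j0, hj0⟩ := hne
        have hneg : ∃ j, x 0 j - y 0 j < 0 := by
          by_contra h
          push_neg at h
          have := (Finset.sum_eq_zero_iff_of_nonneg (fun j _ => h j)).mp hsum
          exact hj0 (this j0 (Finset.mem_univ j0))
        have hposj : ∃ j, 0 < x 0 j - y 0 j := by
          by_contra h
          push_neg at h
          have hsum' : ∑ j, (y 0 j - x 0 j) = 0 := by
            rw [Finset.sum_sub_distrib, hxr 0, hyr 0, sub_self]
          have := (Finset.sum_eq_zero_iff_of_nonneg (fun j _ => by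
            have := h j; omega)).mp hsum'
          have := this j0 (Finset.mem_univ j0); omega
        obtain ⟨j, hj⟩ := hneg
        obtain ⟨j', hj'⟩ := hposj
        have hjj : j ≠ j' := by rintro rfl; omega
        set x' := x + rectMove q 0 1 j j' with hx'def
        have hx'val : ∀ a b, x' a b = x a b +
            (if a = 0 then 1 else -1) * ((if b = j then 1 else 0) - (if b = j' then 1 else 0)) := by
          intro a b
          simp [hx'def, Matrix.add_apply, rect01 q j j' hjj]
        -- lower bounds needed
        have hx1j : 1 ≤ x 1 j := by
          have hc1 := hxc j; have hc2 := hyc j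
          rw [Fin.sum_univ_two] at hc1 hc2
          have := hy0 1 j; omega
        have hx0j' : 1 ≤ x 0 j' := by have := hy0 0 j'; omega
        have hx'mem : x' ∈ intTransportationTables q u v := by
          refine ⟨?_, ?_, ?_⟩
          · intro a b
            have ha := hx0 a b
            rw [hx'val]
            rcases (by decide : ∀ a : Fin 2, a = 0 ∨ a = 1) a with rfl | rfl <;>
              rcases eq_or_ne b j with rfl | hbj <;>
              rcases eq_or_ne b j' with rfl | hbj' <;>
              split_ifs <;> omega
          · intro a
            simp only [hx'def, Matrix.add_apply, Finset.sum_add_distrib,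
              rect01_rowsum q j j' hjj a, hxr a, add_zero]
          · intro b
            simp only [hx'def, Matrix.add_apply, Finset.sum_add_distrib,
              rect01_colsum q j j' hjj b, hxc b, add_zero]
        have hstep : rectStep q u v x x' :=
          ⟨⟨hx0, hxr, hxc⟩, hx'mem, 0, 1, j, j', by decide, hjj, rfl⟩
        have hdec : ∑ b, (x' 0 b - y 0 b).natAbs < n := by
          rw [← hn]
          apply Finset.sum_lt_sum
          · intro b _
            rw [hx'val]
            rcases eq_or_ne b j with rfl | hbj <;> rcases eq_or_ne b j' with rfl | hbj' <;>
              split_ifs <;> omega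
          · refine ⟨j, Finset.mem_univ j, ?_⟩
            rw [hx'val]
            rw [if_pos rfl, if_pos rfl, if_neg hjj]
            omega
        exact Relation.ReflTransGen.head hstep
          (IH _ hdec x' hx'mem rfl)
  exact key _ x hx rfl
end

section
/- Two distinct vertices x and x' of a generic p×q transportation polytope P are adjacent (connected by an edge of P) if and only if the union of their support graphs B(x) ∪ B(x') in K_{p,q} contains a unique cycle. -/
open Finset

/-- The support graph `B(x)` of a table `x`: the bipartite graph on supply nodes `Fin p`
and demand nodes `Fin q` with an edge `(i, j)` iff `x i j > 0`. -/
def supportGraph {p q : ℕ} (x : Matrix (Fin p) (Fin q) ℝ) :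
    SimpleGraph (Fin p ⊕ Fin q) where
  Adj a b :=
    match a, b with
    | .inl i, .inr j => 0 < x i j
    | .inr j, .inl i => 0 < x i j
    | _, _ => False
  symm := ⟨by rintro (i | j) (i' | j') h <;> exact h⟩
  loopless := ⟨by rintro (i | j) h <;> exact h⟩

/-- A graph contains a unique cycle: it has a cycle, and any two cycles traverse the
same set of edges. -/
def HasUniqueCycle {V : Type*} [DecidableEq V] (G : SimpleGraph V) : Prop :=
  ¬ G.IsAcyclic ∧
    ∀ ⦃a b : V⦄ (c : G.Walk a a) (d : G.Walk b b), c.IsCycle → d.IsCycle →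
      c.edges.toFinset = d.edges.toFinset

/-!
Differences of points of the polytope are circulations: matrices with vanishing row and column
sums. A circulation carries no flow across a bridge of its support, so a nonzero circulation has a
cycle in its support; conversely, traversing a cycle of `K_{p,q}` with alternating signs `±1`
gives a circulation supported exactly on that cycle.

If `[x, x']` is an edge, its midpoint can be pushed in both directions along any circulation
supported on `B(x) ∪ B(x')`, so every such circulation is a multiple of `x' - x`. Applied to the
circulation of a cycle, this shows that every cycle has the support of `x' - x` as its edge set.

If `B(x) ∪ B(x')` has a unique cycle, any two circulations supported on it are proportional:
subtracting a suitable multiple kills an entry on the cycle and leaves an acyclic circulation,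
which is zero. Hence every point of the polytope supported on `B(x) ∪ B(x')` lies on the line
through `x` and `x'`, and between them since both are vertices. Any segment of the polytope
through a point of `[x, x']` consists of such points, so `[x, x']` is a face.
-/

open SimpleGraph Sum

section Circulation

variable {m n : Type*} [Fintype m] [Fintype n]

def netOutflow : Matrix m n ℝ →ₗ[ℝ] m ⊕ n → ℝ where
  toFun d := Sum.elim (fun i => ∑ j, d i j) (fun j => -∑ i, d i j)
  map_add' d e := by
    ext (i | j) <;> simp [Finset.sum_add_distrib, add_comm]
  map_smul' c d := by
    ext (i | j) <;> simp [Finset.mul_sum]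

@[simp] lemma netOutflow_inl (d : Matrix m n ℝ) (i : m) : netOutflow d (inl i) = ∑ j, d i j :=
  rfl

@[simp] lemma netOutflow_inr (d : Matrix m n ℝ) (j : n) : netOutflow d (inr j) = -∑ i, d i j :=
  rfl

abbrev circulations : Submodule ℝ (Matrix m n ℝ) := LinearMap.ker netOutflow

lemma mem_circulations_iff {d : Matrix m n ℝ} :
    d ∈ circulations ↔ (∀ i, ∑ j, d i j = 0) ∧ ∀ j, ∑ i, d i j = 0 := by
  simp [funext_iff, Sum.forall]

lemma sum_sum_eq_of_mem_circulations {d : Matrix m n ℝ} (hd : d ∈ circulations)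
    (Y : m → Prop) (Z : n → Prop) [DecidablePred Y] [DecidablePred Z] :
    ∑ i with Y i, ∑ j with ¬ Z j, d i j = ∑ i with ¬ Y i, ∑ j with Z j, d i j := by
  obtain ⟨hrow, hcol⟩ := mem_circulations_iff.1 hd
  have hY : ∑ i with Y i, (∑ j with Z j, d i j + ∑ j with ¬ Z j, d i j) = 0 :=
    Finset.sum_eq_zero fun i _ => by rw [Finset.sum_filter_add_sum_filter_not, hrow]
  have hZ : ∑ j with Z j, (∑ i with Y i, d i j + ∑ i with ¬ Y i, d i j) = 0 :=
    Finset.sum_eq_zero fun j _ => by rw [Finset.sum_filter_add_sum_filter_not, hcol]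
  rw [Finset.sum_add_distrib] at hY hZ
  rw [Finset.sum_comm (s := Finset.univ.filter Z), Finset.sum_comm (s := Finset.univ.filter Z)]
    at hZ
  linarith

end Circulation

section NonzeroGraph

variable {m n : Type*}

def nonzeroGraph (d : Matrix m n ℝ) : SimpleGraph (m ⊕ n) where
  Adj a b :=
    match a, b with
    | inl i, inr j => d i j ≠ 0
    | inr j, inl i => d i j ≠ 0
    | _, _ => False
  symm := ⟨by rintro (i | j) (i' | j') h <;> exact h⟩
  loopless := ⟨by rintro (i | j) h <;> exact h⟩

variable {d e f : Matrix m n ℝ} {i : m} {j : n}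

@[simp] lemma nonzeroGraph_adj_inl_inr : (nonzeroGraph d).Adj (inl i) (inr j) ↔ d i j ≠ 0 :=
  Iff.rfl

@[simp] lemma nonzeroGraph_adj_inr_inl : (nonzeroGraph d).Adj (inr j) (inl i) ↔ d i j ≠ 0 :=
  Iff.rfl

@[simp] lemma not_nonzeroGraph_adj_inl_inl (i' : m) : ¬ (nonzeroGraph d).Adj (inl i) (inl i') :=
  id

@[simp] lemma not_nonzeroGraph_adj_inr_inr (j' : n) : ¬ (nonzeroGraph d).Adj (inr j) (inr j') :=
  id

@[simp] lemma nonzeroGraph_zero : nonzeroGraph (0 : Matrix m n ℝ) = ⊥ := by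
  ext (i | j) (i' | j') <;> simp

lemma nonzeroGraph_le_completeBipartiteGraph : nonzeroGraph d ≤ completeBipartiteGraph m n := by
  rintro (i | j) (i' | j') h <;> simp_all

lemma nonzeroGraph_le_iff :
    nonzeroGraph d ≤ nonzeroGraph e ↔ ∀ i j, d i j ≠ 0 → e i j ≠ 0 :=
  ⟨fun h i j => @h (inl i) (inr j), by rintro h (i | j) (i' | j') <;> simp_all⟩

lemma nonzeroGraph_le_sup_iff :
    nonzeroGraph f ≤ nonzeroGraph d ⊔ nonzeroGraph e ↔
      ∀ i j, d i j = 0 → e i j = 0 → f i j = 0 := by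
  refine ⟨fun h i j hd he => not_not.1 fun hf => ?_, fun h => ?_⟩
  · simpa [hd, he] using @h (inl i) (inr j) hf
  · rintro (i | j) (i' | j') <;> simp only [sup_adj, nonzeroGraph_adj_inl_inr,
      nonzeroGraph_adj_inr_inl, not_nonzeroGraph_adj_inl_inl, not_nonzeroGraph_adj_inr_inr,
      or_self, imp_self] <;> grind

lemma nonzeroGraph_add_le : nonzeroGraph (d + e) ≤ nonzeroGraph d ⊔ nonzeroGraph e :=
  nonzeroGraph_le_sup_iff.2 fun i j hd he => by simp [hd, he]

lemma nonzeroGraph_sub_le : nonzeroGraph (d - e) ≤ nonzeroGraph d ⊔ nonzeroGraph e :=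
  nonzeroGraph_le_sup_iff.2 fun i j hd he => by simp [hd, he]

lemma nonzeroGraph_smul_le (t : ℝ) : nonzeroGraph (t • d) ≤ nonzeroGraph d :=
  nonzeroGraph_le_iff.2 fun _ _ h => right_ne_zero_of_mul h

lemma nonzeroGraph_smul {t : ℝ} (ht : t ≠ 0) : nonzeroGraph (t • d) = nonzeroGraph d := by
  ext (i | j) (i' | j') <;> simp [ht]

lemma nonzeroGraph_le_of_mem_openSegment {y z w : Matrix m n ℝ}
    (hy : ∀ i j, 0 ≤ y i j) (hz : ∀ i j, 0 ≤ z i j) (hw : w ∈ openSegment ℝ y z) :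
    nonzeroGraph y ≤ nonzeroGraph w := by
  obtain ⟨a, b, ha, hb, -, rfl⟩ := hw
  refine nonzeroGraph_le_iff.2 fun i j hij => ?_
  have := (hy i j).lt_of_ne' hij
  have := hz i j
  simp only [Matrix.add_apply, Matrix.smul_apply, smul_eq_mul]
  positivity

lemma supportGraph_eq_nonzeroGraph {p q : ℕ} {x : Matrix (Fin p) (Fin q) ℝ}
    (hx : ∀ i j, 0 ≤ x i j) : supportGraph x = nonzeroGraph x := by
  ext (i | j) (i' | j')
  all_goals simp only [supportGraph, nonzeroGraph]
  · exact (hx _ _).lt_iff_ne'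
  · exact (hx _ _).lt_iff_ne'

end NonzeroGraph

section Bridges

variable {m n : Type*} [Fintype m] [Fintype n] {d : Matrix m n ℝ}

/-- Deleting the bridge leaves a cut crossed by no other edge of the support, and a circulation
has zero net flow across every cut. -/
lemma apply_eq_zero_of_isBridge_nonzeroGraph (hd : d ∈ circulations) {i₀ : m} {j₀ : n}
    (hbr : (nonzeroGraph d).IsBridge s(inl i₀, inr j₀)) : d i₀ j₀ = 0 := by
  classical
  by_contra hadj
  set K := ((nonzeroGraph d).deleteEdges {s(inl i₀, inr j₀)}).Reachable (inr j₀)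
  have hK {a b} (ha : K a) (hb : ¬ K b) (hab : (nonzeroGraph d).Adj a b) :
      s(a, b) = s(inl i₀, inr j₀) := by
    by_contra hne
    exact hb (ha.trans (deleteEdges_adj.2 ⟨hab, hne⟩).reachable)
  have hi₀ : ¬ K (inl i₀) := fun h => isBridge_iff.1 hbr h.symm
  have hj₀ : K (inr j₀) := Reachable.refl _
  have hout : ∑ i with K (inl i), ∑ j with ¬ K (inr j), d i j = 0 :=
    Finset.sum_eq_zero fun i hi => Finset.sum_eq_zero fun j hj => not_not.1 fun hij => by
      simp only [Finset.mem_filter] at hi hj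
      obtain ⟨rfl, -⟩ : i = i₀ ∧ j = j₀ := by simpa using hK hi.2 hj.2 hij
      exact hi₀ hi.2
  have hin : ∑ i with ¬ K (inl i), ∑ j with K (inr j), d i j = d i₀ j₀ := by
    refine (Finset.sum_eq_single_of_mem i₀ (by simpa using hi₀) fun i hi hne => ?_).trans
      (Finset.sum_eq_single_of_mem j₀ (by simpa using hj₀) fun j hj hne => ?_)
    · refine Finset.sum_eq_zero fun j hj => not_not.1 fun hij => hne ?_
      simp only [Finset.mem_filter, Finset.mem_univ, true_and] at hi hj
      have := hK hj hi (show (nonzeroGraph d).Adj _ (inl i) from hij)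
      simp_all
    · refine not_not.1 fun hij => hne ?_
      simp only [Finset.mem_filter, Finset.mem_univ, true_and] at hj
      simpa using hK hj hi₀ (show (nonzeroGraph d).Adj _ (inl i₀) from hij)
  exact hadj (by rw [← hin, ← sum_sum_eq_of_mem_circulations hd, hout])

lemma eq_zero_of_isAcyclic_nonzeroGraph (hd : d ∈ circulations)
    (hac : (nonzeroGraph d).IsAcyclic) : d = 0 := by
  ext i j
  by_contra hij
  exact hij <|
    apply_eq_zero_of_isBridge_nonzeroGraph hd (isAcyclic_iff_forall_adj_isBridge.1 hac hij)

end Bridges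

section WalkFlow

variable {m n : Type*} [DecidableEq m] [DecidableEq n]

def dartFlow : m ⊕ n → m ⊕ n → Matrix m n ℝ
  | inl i, inr j => Matrix.single i j 1
  | inr j, inl i => -Matrix.single i j 1
  | _, _ => 0

def walkFlow {G : SimpleGraph (m ⊕ n)} {a b : m ⊕ n} (w : G.Walk a b) : Matrix m n ℝ :=
  (w.darts.map fun e => dartFlow e.fst e.snd).sum

variable {G : SimpleGraph (m ⊕ n)}

@[simp] lemma walkFlow_nil {a : m ⊕ n} : walkFlow (Walk.nil : G.Walk a a) = 0 := rfl

@[simp] lemma walkFlow_cons {a b c : m ⊕ n} (h : G.Adj a b) (w : G.Walk b c) :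
    walkFlow (w.cons h) = dartFlow a b + walkFlow w := by
  simp [walkFlow]

lemma dartFlow_apply_ne_zero_iff (a b : m ⊕ n) (i : m) (j : n) :
    dartFlow a b i j ≠ 0 ↔ s(inl i, inr j) = s(a, b) := by
  rcases a with i' | j' <;> rcases b with i'' | j'' <;>
    simp [dartFlow, Matrix.single_apply, eq_comm, and_comm]

lemma walkFlow_apply_ne_zero_iff {a b : m ⊕ n} {w : G.Walk a b} (hw : w.IsTrail) (i : m) (j : n) :
    walkFlow w i j ≠ 0 ↔ s(inl i, inr j) ∈ w.edges := by
  induction w with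
  | nil => simp
  | @cons a b c h w ih =>
    rw [Walk.isTrail_cons] at hw
    rw [walkFlow_cons, Matrix.add_apply, Walk.edges_cons, List.mem_cons]
    by_cases he : s(inl i, inr j) = s(a, b)
    · have hw0 : walkFlow w i j = 0 := not_not.1 fun h => hw.2 (he ▸ (ih hw.1).1 h)
      simpa [hw0, he] using (dartFlow_apply_ne_zero_iff a b i j).2 he
    · have hd0 : dartFlow a b i j = 0 :=
        not_not.1 fun h => he ((dartFlow_apply_ne_zero_iff a b i j).1 h)
      simpa [hd0, he] using ih hw.1

lemma edgeSet_nonzeroGraph_walkFlow (hG : G ≤ completeBipartiteGraph m n) {a b : m ⊕ n}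
    {w : G.Walk a b} (hw : w.IsTrail) :
    (nonzeroGraph (walkFlow w)).edgeSet = {e | e ∈ w.edges} := by
  have hbip {a b : m ⊕ n} (h : s(a, b) ∈ w.edges) : (completeBipartiteGraph m n).Adj a b :=
    hG (w.adj_of_mem_edges h)
  ext ⟨a, b⟩
  rcases a with i | j <;> rcases b with i' | j'
  · exact iff_of_false (by simp) fun h => by simpa using hbip h
  · simpa using walkFlow_apply_ne_zero_iff hw i j'
  · simpa [Sym2.eq_swap] using walkFlow_apply_ne_zero_iff hw i' j
  · exact iff_of_false (by simp) fun h => by simpa using hbip h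

variable [Fintype m] [Fintype n]

lemma netOutflow_dartFlow {a b : m ⊕ n} (hab : (completeBipartiteGraph m n).Adj a b) :
    netOutflow (dartFlow a b) = Pi.single a 1 - Pi.single b 1 := by
  rcases a with i | j <;> rcases b with i' | j' <;> ext (k | k) <;>
    simp_all [dartFlow, Matrix.single_apply, Pi.single_apply, ite_and, eq_comm]

lemma netOutflow_walkFlow (hG : G ≤ completeBipartiteGraph m n) {a b : m ⊕ n} (w : G.Walk a b) :
    netOutflow (walkFlow w) = Pi.single a 1 - Pi.single b 1 := by
  induction w with
  | nil => simp
  | cons h w ih => rw [walkFlow_cons, map_add, ih, netOutflow_dartFlow (hG h)]; abel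

lemma walkFlow_mem_circulations (hG : G ≤ completeBipartiteGraph m n) {a : m ⊕ n}
    (c : G.Walk a a) : walkFlow c ∈ circulations := by
  rw [LinearMap.mem_ker, netOutflow_walkFlow hG, sub_self]

end WalkFlow

section UniqueCycle

variable {m n : Type*} [Fintype m] [Fintype n] [DecidableEq m] [DecidableEq n]

lemma HasUniqueCycle.exists_eq_smul {G : SimpleGraph (m ⊕ n)} (hG : HasUniqueCycle G)
    {d d' : Matrix m n ℝ} (hd : d ∈ circulations) (hd' : d' ∈ circulations)
    (hdG : nonzeroGraph d ≤ G) (hd'G : nonzeroGraph d' ≤ G) (hd'0 : d' ≠ 0) :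
    ∃ t : ℝ, d = t • d' := by
  obtain ⟨i₀, j₀, he₀⟩ : ∃ i j, d' i j ≠ 0 := by
    by_contra! h
    exact hd'0 (Matrix.ext h)
  obtain ⟨a, c, hc, hc₀⟩ : ∃ (a : m ⊕ n) (c : (nonzeroGraph d').Walk a a),
      c.IsCycle ∧ s(inl i₀, inr j₀) ∈ c.edges := by
    have hbr := mt (apply_eq_zero_of_isBridge_nonzeroGraph hd') he₀
    rw [isBridge_iff_forall_cycle_notMem
      (show s(inl i₀, inr j₀) ∈ (nonzeroGraph d').edgeSet from he₀)] at hbr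
    simpa only [not_forall, not_not, exists_prop] using hbr
  set t := d i₀ j₀ / d' i₀ j₀
  have hr : d - t • d' ∈ circulations := sub_mem hd (Submodule.smul_mem _ t hd')
  have hrG : nonzeroGraph (d - t • d') ≤ G :=
    nonzeroGraph_sub_le.trans (sup_le hdG ((nonzeroGraph_smul_le t).trans hd'G))
  have hr₀ : (d - t • d') i₀ j₀ = 0 := by
    simp [t, he₀]
  refine ⟨t, sub_eq_zero.1 (eq_zero_of_isAcyclic_nonzeroGraph hr fun b c' hc' => ?_)⟩
  have hedges := hG.2 (c.mapLe hd'G) (c'.mapLe hrG) (hc.mapLe hd'G) (hc'.mapLe hrG)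
  simp only [Walk.edges_mapLe_eq_edges] at hedges
  have : s(inl i₀, inr j₀) ∈ c'.edges := by
    rw [← List.mem_toFinset, ← hedges, List.mem_toFinset]
    exact hc₀
  exact c'.adj_of_mem_edges this hr₀

end UniqueCycle

section Convex

variable {E : Type*} [AddCommGroup E] [Module ℝ E] {P : Set E} {x x' : E}

lemma IsExtreme.exists_eq_smul_sub (h : IsExtreme ℝ P (segment ℝ x x')) {w f : E}
    (hw : w ∈ segment ℝ x x') (hp : w + f ∈ P) (hm : w - f ∈ P) :
    ∃ t : ℝ, f = t • (x' - x) := by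
  have hmid : w ∈ openSegment ℝ (w + f) (w - f) :=
    ⟨1 / 2, 1 / 2, by norm_num, by norm_num, by norm_num, by module⟩
  have hp' := h.left_mem_of_mem_openSegment hp hm hw hmid
  have hm' := h.right_mem_of_mem_openSegment hp hm hw hmid
  rw [segment_eq_image'] at hp' hm'
  obtain ⟨a, -, ha⟩ := hp'
  obtain ⟨b, -, hb⟩ := hm'
  exact ⟨(a - b) / 2, by linear_combination (norm := module) (1 / 2 : ℝ) • (hb - ha)⟩

/-- Otherwise `x` or `x'` would lie strictly between `y` and the other one. -/
lemma mem_segment_of_sub_eq_smul_sub (hx : x ∈ P.extremePoints ℝ)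
    (hx' : x' ∈ P.extremePoints ℝ) {y : E} (hy : y ∈ P) {t : ℝ} (hyt : y - x = t • (x' - x)) :
    y ∈ segment ℝ x x' := by
  obtain rfl : y = x + t • (x' - x) := eq_add_of_sub_eq' hyt
  rcases lt_or_ge t 0 with ht | ht
  · have hmem : x ∈ openSegment ℝ (x + t • (x' - x)) x' := by
      have : 1 - t ≠ 0 := by linarith
      refine ⟨1 / (1 - t), -t / (1 - t), by rw [one_div_pos]; linarith,
        div_pos (by linarith) (by linarith), by field_simp; ring, ?_⟩
      match_scalars <;> field_simp <;> ring
    rw [hx.2 hy hx'.1 hmem]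
    exact left_mem_segment ℝ x x'
  rcases le_or_gt t 1 with ht' | ht'
  · rw [segment_eq_image']
    exact ⟨t, ⟨ht, ht'⟩, rfl⟩
  · have hmem : x' ∈ openSegment ℝ (x + t • (x' - x)) x := by
      have : t ≠ 0 := by linarith
      refine ⟨1 / t, (t - 1) / t, by rw [one_div_pos]; linarith,
        div_pos (by linarith) (by linarith), by field_simp; ring, ?_⟩
      match_scalars <;> field_simp
      ring
    rw [hx'.2 hy hx.1 hmem]
    exact right_mem_segment ℝ x x'

end Convex

lemma exists_pos_forall_mul_abs_le {ι : Type*} [Finite ι] {w f : ι → ℝ}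
    (hw : ∀ k, 0 ≤ w k) (hfw : ∀ k, f k ≠ 0 → w k ≠ 0) :
    ∃ ε > 0, ∀ k, ε * |f k| ≤ w k := by
  have hev (k : ι) : ∀ᶠ ε in nhdsWithin (0 : ℝ) (Set.Ioi 0), ε * |f k| ≤ w k := by
    by_cases hk : f k = 0
    · simp [hk, hw k]
    · have hlim : Filter.Tendsto (fun ε : ℝ => ε * |f k|) (nhds 0) (nhds 0) := by
        simpa using (continuous_mul_const |f k|).tendsto 0
      exact nhdsWithin_le_nhds (hlim.eventually (ge_mem_nhds ((hw k).lt_of_ne' (hfw k hk))))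
  obtain ⟨ε, hε, hεk⟩ := (eventually_mem_nhdsWithin.and (Filter.eventually_all.2 hev)).exists
  exact ⟨ε, hε, hεk⟩

section TransportationPolytope

variable {p q : ℕ} {u : Fin p → ℝ} {v : Fin q → ℝ} {x x' y : Matrix (Fin p) (Fin q) ℝ}

lemma mem_transportationPolytope_iff :
    x ∈ transportationPolytope p q u v ↔
      (∀ i j, 0 ≤ x i j) ∧ netOutflow x = Sum.elim u (-v) := by
  simp [transportationPolytope, funext_iff, Sum.forall]

lemma convex_transportationPolytope : Convex ℝ (transportationPolytope p q u v) := by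
  intro x hx y hy a b ha hb hab
  rw [mem_transportationPolytope_iff] at hx hy ⊢
  refine ⟨fun i j => ?_, ?_⟩
  · simpa using add_nonneg (mul_nonneg ha (hx.1 i j)) (mul_nonneg hb (hy.1 i j))
  · rw [map_add, map_smul, map_smul, hx.2, hy.2, ← add_smul, hab, one_smul]

lemma sub_mem_circulations (hx : x ∈ transportationPolytope p q u v)
    (hy : y ∈ transportationPolytope p q u v) : x - y ∈ circulations := by
  rw [mem_transportationPolytope_iff] at hx hy
  rw [LinearMap.mem_ker, map_sub, hx.2, hy.2, sub_self]

lemma exists_pos_add_smul_mem_and_sub_smul_mem {w f : Matrix (Fin p) (Fin q) ℝ}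
    (hw : w ∈ transportationPolytope p q u v) (hf : f ∈ circulations)
    (hfw : ∀ i j, f i j ≠ 0 → w i j ≠ 0) :
    ∃ ε : ℝ, 0 < ε ∧ w + ε • f ∈ transportationPolytope p q u v ∧
      w - ε • f ∈ transportationPolytope p q u v := by
  simp only [mem_transportationPolytope_iff] at hw ⊢
  obtain ⟨ε, hε, hεf⟩ := exists_pos_forall_mul_abs_le
    (w := fun k : Fin p × Fin q => w k.1 k.2) (f := fun k => f k.1 k.2)
    (fun _ => hw.1 _ _) (fun _ => hfw _ _)
  have hbound (i j) : |ε * f i j| ≤ w i j := by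
    rw [abs_mul, abs_of_pos hε]
    exact hεf (i, j)
  rw [LinearMap.mem_ker] at hf
  refine ⟨ε, hε, ⟨fun i j => ?_, ?_⟩, ⟨fun i j => ?_, ?_⟩⟩
  · simpa using neg_le_iff_add_nonneg'.1 (abs_le.1 (hbound i j)).1
  · rw [map_add, map_smul, hf, smul_zero, add_zero, hw.2]
  · simpa using sub_nonneg.2 (abs_le.1 (hbound i j)).2
  · rw [map_sub, map_smul, hf, smul_zero, sub_zero, hw.2]

end TransportationPolytope

section Adjacency

variable {p q : ℕ} {u : Fin p → ℝ} {v : Fin q → ℝ} {x x' : Matrix (Fin p) (Fin q) ℝ}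

lemma IsExtreme.exists_eq_smul_sub_of_nonzeroGraph_le
    (hface : IsExtreme ℝ (transportationPolytope p q u v) (segment ℝ x x'))
    {f : Matrix (Fin p) (Fin q) ℝ} (hf : f ∈ circulations)
    (hfG : nonzeroGraph f ≤ nonzeroGraph x ⊔ nonzeroGraph x') :
    ∃ t : ℝ, f = t • (x' - x) := by
  have hx := (mem_transportationPolytope_iff.1 (hface.subset (left_mem_segment ℝ x x'))).1
  have hx' := (mem_transportationPolytope_iff.1 (hface.subset (right_mem_segment ℝ x x'))).1
  set w : Matrix (Fin p) (Fin q) ℝ := (1 / 2 : ℝ) • x + (1 / 2 : ℝ) • x'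
  have hw : w ∈ segment ℝ x x' := ⟨1 / 2, 1 / 2, by norm_num, by norm_num, by norm_num, rfl⟩
  have hfw (i j) (hij : f i j ≠ 0) : w i j ≠ 0 := by
    have hxx' : x i j ≠ 0 ∨ x' i j ≠ 0 := by simpa using @hfG (inl i) (inr j) hij
    have := hx i j
    have := hx' i j
    simp only [w, Matrix.add_apply, Matrix.smul_apply, smul_eq_mul]
    rcases hxx' with h | h <;> positivity
  obtain ⟨ε, hε, hp, hm⟩ := exists_pos_add_smul_mem_and_sub_smul_mem (hface.subset hw) hf hfw
  obtain ⟨t, ht⟩ := hface.exists_eq_smul_sub hw hp hm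
  exact ⟨ε⁻¹ * t, by rw [mul_smul, ← ht, inv_smul_smul₀ hε.ne']⟩

lemma IsExtreme.edgeSet_eq_of_isCycle
    (hface : IsExtreme ℝ (transportationPolytope p q u v) (segment ℝ x x'))
    {a : Fin p ⊕ Fin q} {c : (nonzeroGraph x ⊔ nonzeroGraph x').Walk a a} (hc : c.IsCycle) :
    {e | e ∈ c.edges} = (nonzeroGraph (x' - x)).edgeSet := by
  have hG : nonzeroGraph x ⊔ nonzeroGraph x' ≤ completeBipartiteGraph _ _ :=
    sup_le nonzeroGraph_le_completeBipartiteGraph nonzeroGraph_le_completeBipartiteGraph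
  have hedges := edgeSet_nonzeroGraph_walkFlow hG hc.isTrail
  have hfG : nonzeroGraph (walkFlow c) ≤ nonzeroGraph x ⊔ nonzeroGraph x' :=
    edgeSet_subset_edgeSet.1 (hedges ▸ fun e he => c.edges_subset_edgeSet he)
  obtain ⟨t, ht⟩ :=
    hface.exists_eq_smul_sub_of_nonzeroGraph_le (walkFlow_mem_circulations hG c) hfG
  have ht0 : t ≠ 0 := by
    rintro rfl
    obtain ⟨e, he⟩ := List.exists_mem_of_ne_nil _ (Walk.edges_eq_nil.not.2 hc.not_nil)
    have : e ∈ (nonzeroGraph (walkFlow c)).edgeSet := hedges ▸ he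
    simp [ht] at this
  rw [← hedges, ht, nonzeroGraph_smul ht0]

lemma mem_segment_of_nonzeroGraph_le (hx : x ∈ (transportationPolytope p q u v).extremePoints ℝ)
    (hx' : x' ∈ (transportationPolytope p q u v).extremePoints ℝ) (hne : x ≠ x')
    (hG : HasUniqueCycle (nonzeroGraph x ⊔ nonzeroGraph x'))
    {y : Matrix (Fin p) (Fin q) ℝ} (hy : y ∈ transportationPolytope p q u v)
    (hyG : nonzeroGraph y ≤ nonzeroGraph x ⊔ nonzeroGraph x') : y ∈ segment ℝ x x' := by
  obtain ⟨t, ht⟩ := hG.exists_eq_smul (sub_mem_circulations hy hx.1)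
    (sub_mem_circulations hx'.1 hx.1) (nonzeroGraph_sub_le.trans (sup_le hyG le_sup_left))
    (nonzeroGraph_sub_le.trans_eq (sup_comm _ _)) (sub_ne_zero.2 hne.symm)
  exact mem_segment_of_sub_eq_smul_sub hx hx' hy ht

lemma isExtreme_segment_of_hasUniqueCycle
    (hx : x ∈ (transportationPolytope p q u v).extremePoints ℝ)
    (hx' : x' ∈ (transportationPolytope p q u v).extremePoints ℝ) (hne : x ≠ x')
    (hG : HasUniqueCycle (nonzeroGraph x ⊔ nonzeroGraph x')) :
    IsExtreme ℝ (transportationPolytope p q u v) (segment ℝ x x') := by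
  refine ⟨convex_transportationPolytope.segment_subset hx.1 hx'.1,
    fun y hy z hz w hw hwyz => mem_segment_of_nonzeroGraph_le hx hx' hne hG hy ?_⟩
  obtain ⟨a, b, -, -, -, rfl⟩ := hw
  refine (nonzeroGraph_le_of_mem_openSegment (mem_transportationPolytope_iff.1 hy).1
    (mem_transportationPolytope_iff.1 hz).1 hwyz).trans (nonzeroGraph_add_le.trans ?_)
  exact sup_le_sup (nonzeroGraph_smul_le a) (nonzeroGraph_smul_le b)

end Adjacency

theorem generic_transportationPolytope_adjacent_iff_uniqueCycle_general (p q : ℕ)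
    (u : Fin p → ℝ) (v : Fin q → ℝ)
    (x x' : Matrix (Fin p) (Fin q) ℝ)
    (hx : x ∈ Set.extremePoints ℝ (transportationPolytope p q u v))
    (hx' : x' ∈ Set.extremePoints ℝ (transportationPolytope p q u v))
    (hne : x ≠ x') :
    IsExtreme ℝ (transportationPolytope p q u v) (segment ℝ x x') ↔
      HasUniqueCycle (supportGraph x ⊔ supportGraph x') := by
  rw [supportGraph_eq_nonzeroGraph hx.1.1, supportGraph_eq_nonzeroGraph hx'.1.1]
  refine ⟨fun hface => ⟨fun hacyclic => ?_, fun a b c c' hc hc' => ?_⟩,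
    isExtreme_segment_of_hasUniqueCycle hx hx' hne⟩
  · exact sub_ne_zero.2 hne.symm <| eq_zero_of_isAcyclic_nonzeroGraph
      (sub_mem_circulations hx'.1 hx.1)
      (hacyclic.anti (nonzeroGraph_sub_le.trans_eq (sup_comm _ _)))
  · rw [← Finset.coe_inj, List.coe_toFinset, List.coe_toFinset, hface.edgeSet_eq_of_isCycle hc,
      hface.edgeSet_eq_of_isCycle hc']

/-- Two distinct vertices of a generic transportation polytope are adjacent iff the
union of their support graphs contains a unique cycle. -/
theorem generic_transportationPolytope_adjacent_iff_uniqueCycle (p q : ℕ)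
    (u : Fin p → ℝ) (v : Fin q → ℝ) (hu : ∀ i, 0 < u i) (hv : ∀ j, 0 < v j)
    (hsum : ∑ i, u i = ∑ j, v j)
    (hgen : ∀ (Y : Finset (Fin p)) (Z : Finset (Fin q)),
      Y.Nonempty → Y ≠ Finset.univ → Z.Nonempty → Z ≠ Finset.univ →
      ∑ i ∈ Y, u i ≠ ∑ j ∈ Z, v j)
    (x x' : Matrix (Fin p) (Fin q) ℝ)
    (hx : x ∈ Set.extremePoints ℝ (transportationPolytope p q u v))
    (hx' : x' ∈ Set.extremePoints ℝ (transportationPolytope p q u v))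
    (hne : x ≠ x') :
    IsExtreme ℝ (transportationPolytope p q u v) (segment ℝ x x') ↔
      HasUniqueCycle (supportGraph x ⊔ supportGraph x') :=
  generic_transportationPolytope_adjacent_iff_uniqueCycle_general p q u v x x' hx hx' hne
end
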